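/- arXiv:2209.13065 — 11 statements merged into one kernel-verified Lean document; each statement's English description precedes it below -/
import Mathlib

section
/- Validity of the influence cover cut (Proposition 1): Let (S, p, Z) be a feasible solution, let X ⊆ V be a set of nodes and k ∈ X, and for each i ∈ X choose a subset Ñ_i ⊆ N_i ∖ X and an incentive level p̃_i ∈ P_i such that (Σ_{j ∈ Ñ_i} d(j, i))^Γ + p̃_i < h(i). If k ∈ S, then either there exists a node i ∈ X ∩ S whose assigned incentive satisfies p_i > p̃_i, or there exist i ∈ X and j ∈ N_i ∖ (X ∪ Ñ_i) with (j, i) ∈ Z. -/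
open scoped Classical
open Finset

noncomputable section

/-- In-neighbors of `i` in the arc set `E`. -/
def Nbr {V : Type*} [Fintype V] (E : Finset (V × V)) (i : V) : Finset V :=
  Finset.univ.filter (fun j => (j, i) ∈ E)

/-- A feasible GLCIP solution: a set `S` of active nodes, incentives `p` (with `p i ∈ P i`
for `i ∈ S`), and influence arcs `Z ⊆ E` with both endpoints in `S`, such that `S` admits
an activation order. -/
def IsFeasible {V : Type*} [Fintype V] (E : Finset (V × V)) (d : V → V → ℝ)
    (h : V → ℝ) (P : V → Finset ℝ) (Γ : ℝ)
    (S : Finset V) (p : V → ℝ) (Z : Finset (V × V)) : Prop :=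
  (∀ i ∈ S, p i ∈ P i) ∧ Z ⊆ E ∧ (∀ a ∈ Z, a.1 ∈ S ∧ a.2 ∈ S) ∧
  ∃ v : Fin S.card → V, (∀ t, v t ∈ S) ∧ Function.Injective v ∧
    ∀ t : Fin S.card,
      (∑ s ∈ Finset.univ.filter (fun s : Fin S.card => s < t ∧ (v s, v t) ∈ Z),
          d (v s) (v t)) ^ Γ + p (v t) ≥ h (v t)

/-- Proposition 1: validity of the influence cover cut. -/
theorem influence_cover_cut_valid {V : Type*} [Fintype V]
    (E : Finset (V × V)) (d : V → V → ℝ) (h : V → ℝ) (P : V → Finset ℝ) (Γ α : ℝ)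
    (hE : ∀ a ∈ E, a.1 ≠ a.2)
    (hd : ∀ a ∈ E, 0 < d a.1 a.2)
    (hh : ∀ i, 0 < h i)
    (hP0 : ∀ i, (0 : ℝ) ∈ P i)
    (hPnn : ∀ i, ∀ q ∈ P i, 0 ≤ q)
    (hΓ : 0 < Γ) (hα0 : 0 ≤ α) (hα1 : α ≤ 1)
    (S : Finset V) (p : V → ℝ) (Z : Finset (V × V))
    (hfeas : IsFeasible E d h P Γ S p Z)
    (X : Finset V) (k : V) (hkX : k ∈ X)
    (Nt : V → Finset V) (pt : V → ℝ)
    (hNt : ∀ i ∈ X, Nt i ⊆ Nbr E i \ X)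
    (hpt : ∀ i ∈ X, pt i ∈ P i)
    (hins : ∀ i ∈ X, (∑ j ∈ Nt i, d j i) ^ Γ + pt i < h i)
    (hkS : k ∈ S) :
    (∃ i ∈ X ∩ S, p i > pt i) ∨
    (∃ i ∈ X, ∃ j ∈ Nbr E i \ (X ∪ Nt i), (j, i) ∈ Z) := by
  by_contra hcon
  push_neg at hcon
  obtain ⟨h1, h2⟩ := hcon
  obtain ⟨hPmem, hZE, hZS, v, hvS, hvinj, hact⟩ := hfeas
  have hsurj : ∀ x ∈ S, ∃ t, v t = x := by
    intro x hx
    have himg : Finset.image v Finset.univ = S := by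
      apply Finset.eq_of_subset_of_card_le
      · intro y hy
        simp only [Finset.mem_image] at hy
        obtain ⟨t, _, ht⟩ := hy
        exact ht ▸ hvS t
      · rw [Finset.card_image_of_injective _ hvinj, Finset.card_univ, Fintype.card_fin]
    rw [← himg] at hx
    simpa using hx
  obtain ⟨t0, ht0⟩ := hsurj k hkS
  set T := Finset.univ.filter (fun t => v t ∈ X) with hT
  have hTne : T.Nonempty := ⟨t0, by simp [hT, ht0, hkX]⟩
  set t := T.min' hTne with htd
  have htX : v t ∈ X := (Finset.mem_filter.mp (T.min'_mem hTne)).2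
  set F := Finset.univ.filter (fun s : Fin S.card => s < t ∧ (v s, v t) ∈ Z) with hF
  have hFZ : ∀ s ∈ F, (v s, v t) ∈ Z := by
    intro s hs
    exact (Finset.mem_filter.mp hs).2.2
  have hFsub : ∀ s ∈ F, v s ∈ Nt (v t) := by
    intro s hs
    have hs' := Finset.mem_filter.mp hs
    obtain ⟨hst, hZ⟩ := hs'.2
    have hvsX : v s ∉ X := by
      intro hmem
      have hle : t ≤ s := T.min'_le s (by simp [hT, hmem])
      exact absurd hst (not_lt.mpr hle)
    have hE' : (v s, v t) ∈ E := hZE hZ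
    have hNbr : v s ∈ Nbr E (v t) := by simp [Nbr, hE']
    by_contra hnot
    exact h2 (v t) htX (v s)
      (by simp [Finset.mem_sdiff, Finset.mem_union, hNbr, hvsX, hnot]) hZ
  have hdpos : ∀ s ∈ F, 0 < d (v s) (v t) := fun s hs => hd _ (hZE (hFZ s hs))
  have hsumnn : 0 ≤ ∑ s ∈ F, d (v s) (v t) :=
    Finset.sum_nonneg fun s hs => (hdpos s hs).le
  have hsum : (∑ s ∈ F, d (v s) (v t)) ≤ ∑ j ∈ Nt (v t), d j (v t) := by
    have heq := Finset.sum_image (s := F) (g := v) (f := fun j => d j (v t))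
      (fun a _ b _ hab => hvinj hab)
    rw [← heq]
    apply Finset.sum_le_sum_of_subset_of_nonneg
    · intro j hj
      simp only [Finset.mem_image] at hj
      obtain ⟨s, hs, rfl⟩ := hj
      exact hFsub s hs
    · intro j hj _
      have hj' := hNt (v t) htX hj
      have : (j, v t) ∈ E := by
        have := (Finset.mem_sdiff.mp hj').1
        simpa [Nbr] using this
      exact (hd _ this).le
  have hpow : (∑ s ∈ F, d (v s) (v t)) ^ Γ ≤ (∑ j ∈ Nt (v t), d j (v t)) ^ Γ :=
    Real.rpow_le_rpow hsumnn hsum hΓ.le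
  have hple : p (v t) ≤ pt (v t) := h1 (v t) (Finset.mem_inter.mpr ⟨htX, hvS t⟩)
  have hge := hact t
  have hlt := hins (v t) htX
  rw [← hF] at hge
  linarith
end
end

section
/- Validity of the influence cover cut with right-hand side one (ICC+): Let (S, p, Z) be a feasible solution that additionally satisfies the coverage requirement |S| ≥ ⌈α·n⌉. Let X ⊆ V be a set of nodes with |X| > (1 − α)·n, and for each i ∈ X choose a subset Ñ_i ⊆ N_i ∖ X and an incentive level p̃_i ∈ P_i such that (Σ_{j ∈ Ñ_i} d(j, i))^Γ + p̃_i < h(i). Then either there exists a node i ∈ X ∩ S whose assigned incentive satisfies p_i > p̃_i, or there exist i ∈ X and j ∈ N_i ∖ (X ∪ Ñ_i) with (j, i) ∈ Z. -/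
open scoped Classical
open Finset

noncomputable section

/-- Validity of the influence cover cut with right-hand side one (ICC+). -/
theorem influence_cover_cut_rhs_one_valid {V : Type*} [Fintype V]
    (E : Finset (V × V)) (d : V → V → ℝ) (h : V → ℝ) (P : V → Finset ℝ) (Γ α : ℝ)
    (hE : ∀ a ∈ E, a.1 ≠ a.2)
    (hd : ∀ a ∈ E, 0 < d a.1 a.2)
    (hh : ∀ i, 0 < h i)
    (hP0 : ∀ i, (0 : ℝ) ∈ P i)
    (hPnn : ∀ i, ∀ q ∈ P i, 0 ≤ q)
    (hΓ : 0 < Γ) (hα0 : 0 ≤ α) (hα1 : α ≤ 1)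
    (S : Finset V) (p : V → ℝ) (Z : Finset (V × V))
    (hfeas : IsFeasible E d h P Γ S p Z)
    (hScov : (S.card : ℤ) ≥ ⌈α * (Fintype.card V : ℝ)⌉)
    (X : Finset V)
    (hXbig : (X.card : ℝ) > (1 - α) * (Fintype.card V : ℝ))
    (Nt : V → Finset V) (pt : V → ℝ)
    (hNt : ∀ i ∈ X, Nt i ⊆ Nbr E i \ X)
    (hpt : ∀ i ∈ X, pt i ∈ P i)
    (hins : ∀ i ∈ X, (∑ j ∈ Nt i, d j i) ^ Γ + pt i < h i) :
    (∃ i ∈ X ∩ S, p i > pt i) ∨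
    (∃ i ∈ X, ∃ j ∈ Nbr E i \ (X ∪ Nt i), (j, i) ∈ Z) := by
  by_contra hcon
  push_neg at hcon
  obtain ⟨h1, h2⟩ := hcon
  obtain ⟨hpP, hZE, hZS, v, hvS, hvinj, hact⟩ := hfeas
  -- X ∩ S is nonempty by a counting argument
  have hXS : (X ∩ S).Nonempty := by
    by_contra hne
    rw [Finset.not_nonempty_iff_eq_empty] at hne
    have hcard : X.card + S.card ≤ Fintype.card V := by
      have hdis : Disjoint X S := Finset.disjoint_iff_inter_eq_empty.mpr hne
      have := Finset.card_union_of_disjoint hdis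
      have hle : (X ∪ S).card ≤ Fintype.card V := by
        simpa using Finset.card_le_univ (X ∪ S)
      omega
    have hSc : α * (Fintype.card V : ℝ) ≤ (S.card : ℝ) := by
      have h1' := Int.le_ceil (α * (Fintype.card V : ℝ))
      have h2' : ((⌈α * (Fintype.card V : ℝ)⌉ : ℤ) : ℝ) ≤ (S.card : ℝ) := by
        exact_mod_cast hScov
      linarith
    have hc : (X.card : ℝ) + (S.card : ℝ) ≤ (Fintype.card V : ℝ) := by
      exact_mod_cast hcard
    nlinarith
  obtain ⟨i₀, hi₀⟩ := hXS
  -- v is surjective onto S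
  have himg : Finset.univ.image v = S := by
    apply Finset.eq_of_subset_of_card_le
    · intro x hx
      simp only [Finset.mem_image, Finset.mem_univ, true_and] at hx
      obtain ⟨t, rfl⟩ := hx
      exact hvS t
    · rw [Finset.card_image_of_injective _ hvinj, Finset.card_univ, Fintype.card_fin]
  have hT : (Finset.univ.filter (fun t : Fin S.card => v t ∈ X ∩ S)).Nonempty := by
    have : i₀ ∈ Finset.univ.image v := by rw [himg]; exact (Finset.mem_inter.mp hi₀).2
    simp only [Finset.mem_image, Finset.mem_univ, true_and] at this
    obtain ⟨t, ht⟩ := this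
    refine ⟨t, ?_⟩
    simp only [Finset.mem_filter, Finset.mem_univ, true_and, ht]
    exact hi₀
  set T := Finset.univ.filter (fun t : Fin S.card => v t ∈ X ∩ S) with hTdef
  set t := T.min' hT with htdef
  have htT : t ∈ T := Finset.min'_mem T hT
  have hvt : v t ∈ X ∩ S := (Finset.mem_filter.mp htT).2
  have hvtX : v t ∈ X := (Finset.mem_inter.mp hvt).1
  -- every influencer of v t in Z before time t lies in Nt (v t)
  set F := Finset.univ.filter (fun s : Fin S.card => s < t ∧ (v s, v t) ∈ Z) with hFdef
  have hFmem : ∀ s ∈ F, v s ∈ Nt (v t) := by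
    intro s hs
    obtain ⟨_, hst, hsZ⟩ := Finset.mem_filter.mp hs
    have hsE : (v s, v t) ∈ E := hZE hsZ
    have hNb : v s ∈ Nbr E (v t) := by simp [Nbr, hsE]
    have hsX : v s ∉ X := by
      intro hx
      have : s ∈ T := by
        simp only [hTdef, Finset.mem_filter, Finset.mem_univ, true_and, Finset.mem_inter]
        exact ⟨hx, (hZS _ hsZ).1⟩
      exact absurd (Finset.min'_le T s this) (not_le.mpr hst)
    by_contra hnt
    exact h2 (v t) hvtX (v s) (by simp [Finset.mem_sdiff, hNb, hsX, hnt]) hsZ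
  -- compare sums
  have hdnn : ∀ j ∈ Nt (v t), 0 ≤ d j (v t) := by
    intro j hj
    have := hNt (v t) hvtX hj
    have hjE : (j, v t) ∈ E := by
      have := (Finset.mem_sdiff.mp this).1
      simpa [Nbr] using this
    exact (hd _ hjE).le
  have hsum : (∑ s ∈ F, d (v s) (v t)) ≤ ∑ j ∈ Nt (v t), d j (v t) := by
    have himg2 : ∑ s ∈ F, d (v s) (v t) = ∑ j ∈ F.image v, d j (v t) :=
      (Finset.sum_image (g := v) (f := fun j => d j (v t)) (fun a _ b _ hab => hvinj hab)).symm
    rw [himg2]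
    apply Finset.sum_le_sum_of_subset_of_nonneg
    · intro j hj
      simp only [Finset.mem_image] at hj
      obtain ⟨s, hs, rfl⟩ := hj
      exact hFmem s hs
    · intro j hj _; exact hdnn j hj
  have hFnn : (0 : ℝ) ≤ ∑ s ∈ F, d (v s) (v t) := by
    apply Finset.sum_nonneg
    intro s hs
    obtain ⟨_, _, hsZ⟩ := Finset.mem_filter.mp hs
    exact (hd _ (hZE hsZ)).le
  have hpow : (∑ s ∈ F, d (v s) (v t)) ^ Γ ≤ (∑ j ∈ Nt (v t), d j (v t)) ^ Γ :=
    Real.rpow_le_rpow hFnn hsum hΓ.le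
  have hple : p (v t) ≤ pt (v t) := h1 (v t) hvt
  have hineq := hact t
  have hfin := hins (v t) hvtX
  linarith
end
end

section
/- Validity of the lifted influence cover cut: Let (S, p, Z) be a feasible solution, let X ⊆ V be a set of nodes with k ∈ X, let Ñ_X ⊆ V ∖ X, and for each i ∈ X choose an incentive level p̃_i ∈ P_i such that (Σ_{j ∈ Ñ_X ∩ N_i} d(j, i))^Γ + p̃_i < h(i). If k ∈ S, then either there exists a node i ∈ X ∩ S whose assigned incentive satisfies p_i > p̃_i, or there exists a node j ∈ (V ∖ (X ∪ Ñ_X)) ∩ S. -/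
open scoped Classical
open Finset

noncomputable section

/-- Validity of the lifted influence cover cut. -/
theorem lifted_influence_cover_cut_valid {V : Type*} [Fintype V]
    (E : Finset (V × V)) (d : V → V → ℝ) (h : V → ℝ) (P : V → Finset ℝ) (Γ α : ℝ)
    (hE : ∀ a ∈ E, a.1 ≠ a.2)
    (hd : ∀ a ∈ E, 0 < d a.1 a.2)
    (hh : ∀ i, 0 < h i)
    (hP0 : ∀ i, (0 : ℝ) ∈ P i)
    (hPnn : ∀ i, ∀ q ∈ P i, 0 ≤ q)
    (hΓ : 0 < Γ) (hα0 : 0 ≤ α) (hα1 : α ≤ 1)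
    (S : Finset V) (p : V → ℝ) (Z : Finset (V × V))
    (hfeas : IsFeasible E d h P Γ S p Z)
    (X : Finset V) (k : V) (hkX : k ∈ X)
    (NX : Finset V) (hNX : ∀ j ∈ NX, j ∉ X)
    (pt : V → ℝ)
    (hpt : ∀ i ∈ X, pt i ∈ P i)
    (hins : ∀ i ∈ X, (∑ j ∈ NX ∩ Nbr E i, d j i) ^ Γ + pt i < h i)
    (hkS : k ∈ S) :
    (∃ i ∈ X ∩ S, p i > pt i) ∨
    (∃ j ∈ S, j ∉ X ∪ NX) := by
  by_contra hcon
  push_neg at hcon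
  obtain ⟨h1, h2⟩ := hcon
  obtain ⟨hpP, hZE, hZS, v, hvS, hvinj, hvord⟩ := hfeas
  -- v is surjective onto S
  have himg : Finset.image v Finset.univ = S := by
    apply Finset.eq_of_subset_of_card_le
    · intro x hx
      simp only [Finset.mem_image] at hx
      obtain ⟨t, _, rfl⟩ := hx
      exact hvS t
    · rw [Finset.card_image_of_injective _ hvinj, Finset.card_univ, Fintype.card_fin]
  obtain ⟨tk, _, htk⟩ : ∃ t ∈ Finset.univ, v t = k := by
    rw [← Finset.mem_image, himg]; exact hkS
  have hTne : (Finset.univ.filter (fun t : Fin S.card => v t ∈ X)).Nonempty :=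
    ⟨tk, by simp [htk, hkX]⟩
  set T := Finset.univ.filter (fun t : Fin S.card => v t ∈ X) with hT
  set t0 := T.min' hTne with ht0
  have ht0T : t0 ∈ T := T.min'_mem hTne
  have ht0X : v t0 ∈ X := by simpa [hT] using ht0T
  -- predecessors of t0 are in NX
  have hpred : ∀ s : Fin S.card, s < t0 → v s ∈ NX := by
    intro s hs
    have hsS : v s ∈ S := hvS s
    have : v s ∈ X ∪ NX := h2 _ hsS
    rcases Finset.mem_union.1 this with hsX | hsN
    · exact absurd (T.min'_le s (by simp [hT, hsX])) (not_le.2 hs)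
    · exact hsN
  -- sum bound
  set A := Finset.univ.filter (fun s : Fin S.card => s < t0 ∧ (v s, v t0) ∈ Z) with hA
  have hsub : A.image v ⊆ NX ∩ Nbr E (v t0) := by
    intro j hj
    simp only [Finset.mem_image, hA, Finset.mem_filter, Finset.mem_univ, true_and] at hj
    obtain ⟨s, ⟨hs1, hs2⟩, rfl⟩ := hj
    refine Finset.mem_inter.2 ⟨hpred s hs1, ?_⟩
    simp only [Nbr, Finset.mem_filter, Finset.mem_univ, true_and]
    exact hZE hs2
  have hsumle : (∑ s ∈ A, d (v s) (v t0)) ≤ ∑ j ∈ NX ∩ Nbr E (v t0), d j (v t0) := by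
    have heq : (∑ s ∈ A, d (v s) (v t0)) = ∑ j ∈ A.image v, d j (v t0) :=
      (Finset.sum_image (s := A) (g := v) (f := fun j => d j (v t0)) (fun a _ b _ hab => hvinj hab)).symm
    rw [heq]
    apply Finset.sum_le_sum_of_subset_of_nonneg hsub
    intro j hj _
    have : (j, v t0) ∈ E := by
      have := (Finset.mem_inter.1 hj).2
      simpa [Nbr] using this
    exact (hd _ this).le
  have hnn : (0:ℝ) ≤ ∑ s ∈ A, d (v s) (v t0) := by
    apply Finset.sum_nonneg
    intro s hs
    simp only [hA, Finset.mem_filter, Finset.mem_univ, true_and] at hs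
    exact (hd _ (hZE hs.2)).le
  have hpow : (∑ s ∈ A, d (v s) (v t0)) ^ Γ ≤ (∑ j ∈ NX ∩ Nbr E (v t0), d j (v t0)) ^ Γ :=
    Real.rpow_le_rpow hnn hsumle hΓ.le
  have hple : p (v t0) ≤ pt (v t0) := h1 _ (Finset.mem_inter.2 ⟨ht0X, hvS t0⟩)
  have := hvord t0
  have hlt := hins _ ht0X
  linarith
end
end

section
/- Validity of the lifted influence cover cut with right-hand side one (LICC+): Let (S, p, Z) be a feasible solution that additionally satisfies the coverage requirement |S| ≥ ⌈α·n⌉. Let X ⊆ V be a set of nodes with |X| > (1 − α)·n, let Ñ_X ⊆ V ∖ X, and for each i ∈ X choose an incentive level p̃_i ∈ P_i such that (Σ_{j ∈ Ñ_X ∩ N_i} d(j, i))^Γ + p̃_i < h(i). Then either there exists a node i ∈ X ∩ S whose assigned incentive satisfies p_i > p̃_i, or there exists a node j ∈ (V ∖ (X ∪ Ñ_X)) ∩ S. -/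
open scoped Classical
open Finset

noncomputable section

/-- Validity of the lifted influence cover cut with right-hand side one (LICC+). -/
theorem lifted_influence_cover_cut_rhs_one_valid {V : Type*} [Fintype V]
    (E : Finset (V × V)) (d : V → V → ℝ) (h : V → ℝ) (P : V → Finset ℝ) (Γ α : ℝ)
    (hE : ∀ a ∈ E, a.1 ≠ a.2)
    (hd : ∀ a ∈ E, 0 < d a.1 a.2)
    (hh : ∀ i, 0 < h i)
    (hP0 : ∀ i, (0 : ℝ) ∈ P i)
    (hPnn : ∀ i, ∀ q ∈ P i, 0 ≤ q)
    (hΓ : 0 < Γ) (hα0 : 0 ≤ α) (hα1 : α ≤ 1)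
    (S : Finset V) (p : V → ℝ) (Z : Finset (V × V))
    (hfeas : IsFeasible E d h P Γ S p Z)
    (hScov : (S.card : ℤ) ≥ ⌈α * (Fintype.card V : ℝ)⌉)
    (X : Finset V)
    (hXbig : (X.card : ℝ) > (1 - α) * (Fintype.card V : ℝ))
    (NX : Finset V) (hNX : ∀ j ∈ NX, j ∉ X)
    (pt : V → ℝ)
    (hpt : ∀ i ∈ X, pt i ∈ P i)
    (hins : ∀ i ∈ X, (∑ j ∈ NX ∩ Nbr E i, d j i) ^ Γ + pt i < h i) :
    (∃ i ∈ X ∩ S, p i > pt i) ∨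
    (∃ j ∈ S, j ∉ X ∪ NX) := by

  by_contra hcon
  push_neg at hcon
  obtain ⟨h1, h2⟩ := hcon
  -- S ⊆ X ∪ NX
  have hSsub : S ⊆ X ∪ NX := fun j hj => by
    by_contra hj2
    exact absurd (h2 j hj) (by simpa using hj2)
  obtain ⟨hpP, hZE, hZS, v, hvS, hvinj, hact⟩ := hfeas
  -- X ∩ S nonempty
  have hn : (Fintype.card V : ℝ) ≥ ((X ∪ S).card : ℝ) := by
    exact_mod_cast Finset.card_le_card (Finset.subset_univ _)
  have hScard : (S.card : ℝ) ≥ α * (Fintype.card V : ℝ) := by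
    have := Int.le_ceil (α * (Fintype.card V : ℝ))
    have h2' : ((⌈α * (Fintype.card V : ℝ)⌉ : ℤ) : ℝ) ≤ (S.card : ℝ) := by
      exact_mod_cast hScov
    linarith
  have hinter : (X ∩ S).Nonempty := by
    rw [← Finset.card_pos]
    have hcui : X.card + S.card = (X ∪ S).card + (X ∩ S).card :=
      (Finset.card_union_add_card_inter X S).symm
    have : (0 : ℝ) < ((X ∩ S).card : ℝ) := by
      have : ((X.card : ℝ)) + (S.card : ℝ) = ((X ∪ S).card : ℝ) + ((X ∩ S).card : ℝ) := by
        exact_mod_cast hcui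
      linarith
    exact_mod_cast this
  -- image of v is S
  have himg : Finset.univ.image v = S := by
    apply Finset.eq_of_subset_of_card_le
    · intro x hx
      obtain ⟨t, _, rfl⟩ := Finset.mem_image.mp hx
      exact hvS t
    · rw [Finset.card_image_of_injective _ hvinj, Finset.card_univ, Fintype.card_fin]
  -- there is t with v t ∈ X
  obtain ⟨i0, hi0⟩ := hinter
  have hi0X := (Finset.mem_inter.mp hi0).1
  have hi0S := (Finset.mem_inter.mp hi0).2
  obtain ⟨t0, _, ht0⟩ := Finset.mem_image.mp (himg ▸ hi0S)
  have hTne : (Finset.univ.filter (fun t : Fin S.card => v t ∈ X)).Nonempty :=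
    ⟨t0, Finset.mem_filter.mpr ⟨Finset.mem_univ _, ht0 ▸ hi0X⟩⟩
  set T := Finset.univ.filter (fun t : Fin S.card => v t ∈ X)
  set t := T.min' hTne with htdef
  have htX : v t ∈ X := (Finset.mem_filter.mp (T.min'_mem hTne)).2
  -- earlier nodes are in NX
  have hearlier : ∀ s : Fin S.card, s < t → v s ∈ NX := by
    intro s hs
    have hsX : v s ∉ X := by
      intro hsX
      exact absurd (T.min'_le s (Finset.mem_filter.mpr ⟨Finset.mem_univ _, hsX⟩))
        (not_le.mpr hs)
    rcases Finset.mem_union.mp (hSsub (hvS s)) with h' | h'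
    · exact absurd h' hsX
    · exact h'
  -- compare sums
  set F := Finset.univ.filter (fun s : Fin S.card => s < t ∧ (v s, v t) ∈ Z)
  have hsum1 : ∑ s ∈ F, d (v s) (v t) = ∑ j ∈ F.image v, d j (v t) := by
    rw [Finset.sum_image (fun a _ b _ hab => hvinj hab)]
  have himgsub : F.image v ⊆ NX ∩ Nbr E (v t) := by
    intro j hj
    obtain ⟨s, hs, rfl⟩ := Finset.mem_image.mp hj
    obtain ⟨_, hs1, hs2⟩ := Finset.mem_filter.mp hs
    refine Finset.mem_inter.mpr ⟨hearlier s hs1, ?_⟩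
    exact Finset.mem_filter.mpr ⟨Finset.mem_univ _, hZE hs2⟩
  have hnnall : ∀ j ∈ NX ∩ Nbr E (v t), 0 ≤ d j (v t) := by
    intro j hj
    have : (j, v t) ∈ E := by
      have := (Finset.mem_inter.mp hj).2
      exact (Finset.mem_filter.mp this).2
    exact le_of_lt (hd _ this)
  have hsumle : ∑ s ∈ F, d (v s) (v t) ≤ ∑ j ∈ NX ∩ Nbr E (v t), d j (v t) := by
    rw [hsum1]
    exact Finset.sum_le_sum_of_subset_of_nonneg himgsub (fun j hj _ => hnnall j hj)
  have hsum1nn : 0 ≤ ∑ s ∈ F, d (v s) (v t) := by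
    apply Finset.sum_nonneg
    intro s hs
    exact le_of_lt (hd _ (hZE (Finset.mem_filter.mp hs).2.2))
  have hrpow : (∑ s ∈ F, d (v s) (v t)) ^ Γ ≤ (∑ j ∈ NX ∩ Nbr E (v t), d j (v t)) ^ Γ :=
    Real.rpow_le_rpow hsum1nn hsumle (le_of_lt hΓ)
  have hple : p (v t) ≤ pt (v t) :=
    h1 (v t) (Finset.mem_inter.mpr ⟨htX, hvS t⟩)
  have := hact t
  have := hins (v t) htX
  linarith
end
end

section
/- First-activated-node lemma: Let (S, p, Z) be a feasible solution and let X ⊆ V be a set of nodes with X ∩ S ≠ ∅. Then there exists a node k' ∈ X ∩ S that is activated using only influences from outside X, that is, (Σ_{j ∈ N_{k'} ∖ X, (j, k') ∈ Z} d(j, k'))^Γ + p_{k'} ≥ h(k'). -/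
open scoped Classical
open Finset

noncomputable section

/-- First-activated-node lemma: some node of `X ∩ S` is activated using only
influences coming from outside `X`. -/
theorem first_activated_node {V : Type*} [Fintype V]
    (E : Finset (V × V)) (d : V → V → ℝ) (h : V → ℝ) (P : V → Finset ℝ) (Γ α : ℝ)
    (hE : ∀ a ∈ E, a.1 ≠ a.2)
    (hd : ∀ a ∈ E, 0 < d a.1 a.2)
    (hh : ∀ i, 0 < h i)
    (hP0 : ∀ i, (0 : ℝ) ∈ P i)
    (hPnn : ∀ i, ∀ q ∈ P i, 0 ≤ q)
    (hΓ : 0 < Γ) (hα0 : 0 ≤ α) (hα1 : α ≤ 1)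
    (S : Finset V) (p : V → ℝ) (Z : Finset (V × V))
    (hfeas : IsFeasible E d h P Γ S p Z)
    (X : Finset V) (hXS : (X ∩ S).Nonempty) :
    ∃ k' ∈ X ∩ S,
      (∑ j ∈ (Nbr E k' \ X).filter (fun j => (j, k') ∈ Z), d j k') ^ Γ + p k'
        ≥ h k' := by
  obtain ⟨hpP, hZE, hZS, v, hvS, hvinj, hact⟩ := hfeas
  -- v is surjective onto S
  have himg : Finset.image v Finset.univ = S := by
    apply Finset.eq_of_subset_of_card_le
    · intro x hx
      obtain ⟨t, _, rfl⟩ := Finset.mem_image.mp hx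
      exact hvS t
    · rw [Finset.card_image_of_injective _ hvinj, Finset.card_univ, Fintype.card_fin]
  obtain ⟨x, hx⟩ := hXS
  have hxX := Finset.mem_inter.mp hx
  have hxS : x ∈ Finset.image v Finset.univ := by rw [himg]; exact hxX.2
  obtain ⟨t1, _, ht1⟩ := Finset.mem_image.mp hxS
  set T : Finset (Fin S.card) := Finset.univ.filter (fun t => v t ∈ X) with hT
  have hTne : T.Nonempty := ⟨t1, by simp [hT, ht1, hxX.1]⟩
  set t0 := T.min' hTne with ht0
  have ht0T : t0 ∈ T := T.min'_mem hTne
  have hvt0X : v t0 ∈ X := (Finset.mem_filter.mp ht0T).2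
  refine ⟨v t0, Finset.mem_inter.mpr ⟨hvt0X, hvS t0⟩, ?_⟩
  have key := hact t0
  set A := Finset.univ.filter (fun s : Fin S.card => s < t0 ∧ (v s, v t0) ∈ Z) with hA
  have hsum : (∑ s ∈ A, d (v s) (v t0)) ≤
      ∑ j ∈ (Nbr E (v t0) \ X).filter (fun j => (j, v t0) ∈ Z), d j (v t0) := by
    have heq : (∑ s ∈ A, d (v s) (v t0)) = ∑ j ∈ A.image v, d j (v t0) := by
      rw [Finset.sum_image (fun a _ b _ hab => hvinj hab)]
    rw [heq]
    apply Finset.sum_le_sum_of_subset_of_nonneg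
    · intro j hj
      obtain ⟨s, hs, rfl⟩ := Finset.mem_image.mp hj
      obtain ⟨hst, hZ⟩ := (Finset.mem_filter.mp hs).2
      have hvsX : v s ∉ X := by
        intro hmem
        have : s ∈ T := Finset.mem_filter.mpr ⟨Finset.mem_univ _, hmem⟩
        exact absurd (T.min'_le s this) (not_le.mpr hst)
      refine Finset.mem_filter.mpr ⟨Finset.mem_sdiff.mpr ⟨?_, hvsX⟩, hZ⟩
      exact Finset.mem_filter.mpr ⟨Finset.mem_univ _, hZE hZ⟩
    · intro j hj _
      exact (hd _ (hZE (Finset.mem_filter.mp hj).2)).le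
  have hAnn : (0 : ℝ) ≤ ∑ s ∈ A, d (v s) (v t0) := by
    apply Finset.sum_nonneg
    intro s hs
    exact (hd _ (hZE (Finset.mem_filter.mp hs).2.2)).le
  have hpow : (∑ s ∈ A, d (v s) (v t0)) ^ Γ ≤
      (∑ j ∈ (Nbr E (v t0) \ X).filter (fun j => (j, v t0) ∈ Z), d j (v t0)) ^ Γ :=
    Real.rpow_le_rpow hAnn hsum hΓ.le
  linarith [key]
end
end

section
/- Equivalence of the nonlinear propagation constraint and its linearized lifted form (Appendix Proposition): With the binary single-incentive assumption in force, the inequality Σ_{p ∈ P} p·y_p + (Σ_{j ∈ J} d_j·z_j)^Γ ≥ h·x holds if and only if the inequality Σ_{p ∈ P} (⌈h^{1/Γ}⌉ − ⌈(max(0, h − p))^{1/Γ}⌉)·y_p + Σ_{j ∈ J} d_j·z_j ≥ ⌈h^{1/Γ}⌉·x holds, where ⌈·⌉ denotes the integer ceiling of a real number. -/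
open scoped Classical
open Finset

lemma key_ceil_iff (Γ : ℝ) (hΓ : 0 < Γ) (c : ℝ) (n : ℤ) (hn : 0 ≤ n) :
    c ≤ ((n : ℝ)) ^ Γ ↔ ((⌈(max 0 c) ^ (1 / Γ)⌉ : ℤ) : ℝ) ≤ n := by
  have hn' : (0 : ℝ) ≤ (n : ℝ) := by exact_mod_cast hn
  have hm : (0 : ℝ) ≤ max 0 c := le_max_left _ _
  have h1 : c ≤ ((n : ℝ)) ^ Γ ↔ max 0 c ≤ ((n : ℝ)) ^ Γ := by
    constructor
    · intro h
      exact max_le (Real.rpow_nonneg hn' Γ) h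
    · intro h
      exact le_trans (le_max_right _ _) h
  rw [h1]
  have h2 : max 0 c ≤ ((n : ℝ)) ^ Γ ↔ (max 0 c) ^ (1 / Γ) ≤ (n : ℝ) := by
    rw [one_div]
    exact (Real.rpow_inv_le_iff_of_pos hm hn' hΓ).symm
  rw [h2]
  constructor
  · intro h
    exact_mod_cast Int.ceil_le.mpr h
  · intro h
    exact le_trans (Int.le_ceil _) h

/-- Appendix Proposition: under the binary single-incentive assumption, the nonlinear
propagation constraint is equivalent to its linearized lifted (ceiling) form. -/
theorem propagation_linearization_equiv
    (Γ hth : ℝ) (hΓ : 0 < Γ) (hh : 0 < hth)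
    (P : Finset ℝ) (hP : ∀ q ∈ P, 0 ≤ q)
    {J : Type*} (Jf : Finset J) (d : J → ℤ) (hd : ∀ j ∈ Jf, 0 < d j)
    (x : ℝ) (z : J → ℝ) (y : ℝ → ℝ)
    (hx : x = 0 ∨ x = 1)
    (hz : ∀ j ∈ Jf, z j = 0 ∨ z j = 1)
    (hy : ∀ q ∈ P, y q = 0 ∨ y q = 1)
    (hsum : ∑ q ∈ P, y q = x) :
    (∑ q ∈ P, q * y q + (∑ j ∈ Jf, (d j : ℝ) * z j) ^ Γ ≥ hth * x) ↔
    (∑ q ∈ P, (((⌈hth ^ (1 / Γ)⌉ : ℤ) : ℝ)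
          - ((⌈(max 0 (hth - q)) ^ (1 / Γ)⌉ : ℤ) : ℝ)) * y q
        + ∑ j ∈ Jf, (d j : ℝ) * z j
      ≥ ((⌈hth ^ (1 / Γ)⌉ : ℤ) : ℝ) * x) := by
  -- the weight sum is an integer
  set N : ℤ := ∑ j ∈ Jf, if z j = 1 then d j else 0 with hN
  have hNnn : 0 ≤ N := Finset.sum_nonneg fun j hj => by
    split <;> [exact (hd j hj).le; rfl]
  have hScast : ∑ j ∈ Jf, (d j : ℝ) * z j = (N : ℝ) := by
    rw [hN]
    push_cast
    refine Finset.sum_congr rfl fun j hj => ?_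
    rcases hz j hj with h | h <;> simp [h]
  rcases hx with hx0 | hx1
  · -- x = 0 case: all y q = 0
    subst hx0
    have hy0 : ∀ q ∈ P, y q = 0 := by
      intro q hq
      by_contra hne
      have h1 : y q = 1 := (hy q hq).resolve_left hne
      have : (1 : ℝ) ≤ ∑ q ∈ P, y q := by
        calc (1 : ℝ) = y q := h1.symm
        _ ≤ ∑ q ∈ P, y q := Finset.single_le_sum
            (fun r hr => by rcases hy r hr with h | h <;> simp [h]) hq
      linarith [hsum ▸ this]
    have e1 : ∑ q ∈ P, q * y q = 0 :=
      Finset.sum_eq_zero fun q hq => by rw [hy0 q hq, mul_zero]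
    have e2 : ∑ q ∈ P, (((⌈hth ^ (1 / Γ)⌉ : ℤ) : ℝ)
          - ((⌈(max 0 (hth - q)) ^ (1 / Γ)⌉ : ℤ) : ℝ)) * y q = 0 :=
      Finset.sum_eq_zero fun q hq => by rw [hy0 q hq, mul_zero]
    rw [e1, e2, hScast, mul_zero, mul_zero, zero_add, zero_add]
    have hNR : (0 : ℝ) ≤ (N : ℝ) := by exact_mod_cast hNnn
    constructor
    · intro _; exact hNR
    · intro _; exact Real.rpow_nonneg hNR Γ
  · -- x = 1 case: exactly one y p = 1
    subst hx1
    obtain ⟨p, hpP, hyp1, hyrest⟩ :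
        ∃ p ∈ P, y p = 1 ∧ ∀ q ∈ P, q ≠ p → y q = 0 := by
      have : ∃ p ∈ P, y p ≠ 0 := by
        by_contra h
        push_neg at h
        have : ∑ q ∈ P, y q = 0 := Finset.sum_eq_zero h
        rw [hsum] at this; norm_num at this
      obtain ⟨p, hpP, hp⟩ := this
      have hyp1 : y p = 1 := (hy p hpP).resolve_left hp
      refine ⟨p, hpP, hyp1, fun q hq hne => ?_⟩
      by_contra hqne
      have hq1 : y q = 1 := (hy q hq).resolve_left hqne
      have : (2 : ℝ) ≤ ∑ r ∈ P, y r := by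
        have := Finset.add_sum_erase P y hpP
        have hqmem : q ∈ P.erase p := Finset.mem_erase.mpr ⟨hne, hq⟩
        have h2 : y q ≤ ∑ r ∈ P.erase p, y r :=
          Finset.single_le_sum
            (fun r hr => by
              rcases hy r (Finset.mem_of_mem_erase hr) with h | h <;> simp [h]) hqmem
        linarith
      rw [hsum] at this; norm_num at this
    have e1 : ∑ q ∈ P, q * y q = p :=
      (Finset.sum_eq_single p
        (fun q hq hne => by rw [hyrest q hq hne, mul_zero])
        (fun h => absurd hpP h)).trans (by rw [hyp1, mul_one])
    have e2 : ∑ q ∈ P, (((⌈hth ^ (1 / Γ)⌉ : ℤ) : ℝ)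
          - ((⌈(max 0 (hth - q)) ^ (1 / Γ)⌉ : ℤ) : ℝ)) * y q
        = ((⌈hth ^ (1 / Γ)⌉ : ℤ) : ℝ)
          - ((⌈(max 0 (hth - p)) ^ (1 / Γ)⌉ : ℤ) : ℝ) :=
      (Finset.sum_eq_single p
        (fun q hq hne => by rw [hyrest q hq hne, mul_zero])
        (fun h => absurd hpP h)).trans (by rw [hyp1, mul_one])
    rw [e1, e2, hScast, mul_one, mul_one]
    have hkey := key_ceil_iff Γ hΓ (hth - p) N hNnn
    constructor
    · intro h
      have : hth - p ≤ ((N : ℝ)) ^ Γ := by linarith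
      have := hkey.mp this
      linarith
    · intro h
      have : ((⌈(max 0 (hth - p)) ^ (1 / Γ)⌉ : ℤ) : ℝ) ≤ (N : ℝ) := by linarith
      have := hkey.mpr this
      linarith
end

section
/- Validity of the rooted and truncated propagation inequality: With the binary single-incentive assumption in force and with the weights d_j assumed only to be nonnegative reals, if Σ_{p ∈ P} p·y_p + (Σ_{j ∈ J} d_j·z_j)^Γ ≥ h·x, then Σ_{p ∈ P} (h^{1/Γ} − (max(0, h − p))^{1/Γ})·y_p + Σ_{j ∈ J} d_j·z_j ≥ h^{1/Γ}·x. -/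
open scoped Classical
open Finset

/-- Validity of the rooted and truncated propagation inequality: under the binary
single-incentive assumption (with nonnegative real weights), the nonlinear propagation
constraint implies its rooted truncated linear form. -/
theorem rooted_truncated_propagation_valid
    (Γ hth : ℝ) (hΓ : 0 < Γ) (hh : 0 < hth)
    (P : Finset ℝ) (hP : ∀ q ∈ P, 0 ≤ q)
    {J : Type*} (Jf : Finset J) (d : J → ℝ) (hd : ∀ j ∈ Jf, 0 ≤ d j)
    (x : ℝ) (z : J → ℝ) (y : ℝ → ℝ)
    (hx : x = 0 ∨ x = 1)
    (hz : ∀ j ∈ Jf, z j = 0 ∨ z j = 1)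
    (hy : ∀ q ∈ P, y q = 0 ∨ y q = 1)
    (hsum : ∑ q ∈ P, y q = x)
    (hprop : ∑ q ∈ P, q * y q + (∑ j ∈ Jf, d j * z j) ^ Γ ≥ hth * x) :
    ∑ q ∈ P, (hth ^ (1 / Γ) - (max 0 (hth - q)) ^ (1 / Γ)) * y q
        + ∑ j ∈ Jf, d j * z j
      ≥ hth ^ (1 / Γ) * x := by
  have hSnn : 0 ≤ ∑ j ∈ Jf, d j * z j := by
    apply Finset.sum_nonneg
    intro j hj
    rcases hz j hj with h0 | h1
    · simp [h0]
    · simp [h1, hd j hj]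
  set S := ∑ j ∈ Jf, d j * z j with hS
  rcases hx with rfl | rfl
  · -- x = 0 : all y q = 0
    have hall : ∀ q ∈ P, y q = 0 := by
      intro q hq
      have hnn : ∀ q ∈ P, 0 ≤ y q := by
        intro r hr; rcases hy r hr with h | h <;> simp [h]
      exact (Finset.sum_eq_zero_iff_of_nonneg hnn).mp hsum q hq
    have : ∑ q ∈ P, (hth ^ (1 / Γ) - (max 0 (hth - q)) ^ (1 / Γ)) * y q = 0 := by
      apply Finset.sum_eq_zero
      intro q hq; simp [hall q hq]
    rw [this]
    simpa using hSnn
  · -- x = 1 : exactly one y q = 1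
    obtain ⟨q0, hq0P, hq01⟩ : ∃ q0 ∈ P, y q0 = 1 := by
      by_contra hcon
      push_neg at hcon
      have : ∑ q ∈ P, y q = 0 := by
        apply Finset.sum_eq_zero
        intro q hq
        rcases hy q hq with h0 | h1
        · exact h0
        · exact absurd h1 (hcon q hq)
      rw [hsum] at this; norm_num at this
    have hrest : ∀ q ∈ P, q ≠ q0 → y q = 0 := by
      intro q hq hne
      have hsum' : ∑ q ∈ P \ {q0}, y q = 0 := by
        have := Finset.add_sum_erase P y hq0P
        rw [hq01] at this
        have h2 : ∑ q ∈ P.erase q0, y q = 0 := by linarith [hsum, this]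
        simpa [Finset.sdiff_singleton_eq_erase] using h2
      have hnn : ∀ q ∈ P \ {q0}, 0 ≤ y q := by
        intro r hr; rcases hy r (Finset.mem_sdiff.mp hr).1 with h | h <;> simp [h]
      exact (Finset.sum_eq_zero_iff_of_nonneg hnn).mp hsum' q
        (Finset.mem_sdiff.mpr ⟨hq, by simpa using hne⟩)
    -- reduce sums to q0
    have hsum1 : ∑ q ∈ P, q * y q = q0 := by
      rw [Finset.sum_eq_single_of_mem q0 hq0P (fun q hq hne => by simp [hrest q hq hne])]
      simp [hq01]
    have hsum2 : ∑ q ∈ P, (hth ^ (1 / Γ) - (max 0 (hth - q)) ^ (1 / Γ)) * y q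
        = hth ^ (1 / Γ) - (max 0 (hth - q0)) ^ (1 / Γ) := by
      rw [Finset.sum_eq_single_of_mem q0 hq0P (fun q hq hne => by simp [hrest q hq hne])]
      simp [hq01]
    rw [hsum2]
    have hkey : (max 0 (hth - q0)) ^ (1 / Γ) ≤ S := by
      have hm : max 0 (hth - q0) ≤ S ^ Γ := by
        rw [hsum1] at hprop
        have h1 : hth - q0 ≤ S ^ Γ := by linarith
        have h2 : (0:ℝ) ≤ S ^ Γ := Real.rpow_nonneg hSnn Γ
        exact max_le h2 h1
      calc (max 0 (hth - q0)) ^ (1 / Γ)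
          ≤ (S ^ Γ) ^ (1 / Γ) :=
            Real.rpow_le_rpow (le_max_left _ _) hm (by positivity)
        _ = S := by
            rw [← Real.rpow_mul hSnn, mul_one_div, div_self hΓ.ne', Real.rpow_one]
    linarith
end

section
/- Feasibility of integer solutions of the compact formulation (Proposition 2): Let p be an incentive assignment with p_i ∈ P_i for every i ∈ V. Suppose that for every set X ⊆ V with |X| ≥ ⌊(1 − α)·n⌋ + 1 there exists a node i ∈ X with p_i ≥ p̃_i(X). Then the propagation closure satisfies |A(p)| ≥ ⌈α·n⌉. -/
open scoped Classical
open Finset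

noncomputable section

/-- Propagation iterates of the linear (Γ = 1) GLCIP: `A_0 = ∅` and
`A_{t+1} = {i : p i + Σ_{j ∈ A_t, (j,i) ∈ E} d j i ≥ h i}`. -/
def propIter {V : Type*} [Fintype V] (E : Finset (V × V)) (d : V → V → ℝ)
    (h : V → ℝ) (p : V → ℝ) : ℕ → Finset V
  | 0 => ∅
  | t + 1 => Finset.univ.filter
      (fun i => h i ≤ p i + ∑ j ∈ (propIter E d h p t).filter (fun j => (j, i) ∈ E), d j i)

/-- Propagation closure `A(p) = A_n` with `n = |V|`. -/
def propClosure {V : Type*} [Fintype V] (E : Finset (V × V)) (d : V → V → ℝ)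
    (h : V → ℝ) (p : V → ℝ) : Finset V :=
  propIter E d h p (Fintype.card V)

/-! The iterates `A_t` increase, and there is no strictly increasing chain of `n + 1` subsets of
`V`, so the closure `A = A(p)` is a fixed point of one propagation round. If `|A| < ⌈α n⌉`, the
complement `X = V \ A` has `|X| ≥ ⌊(1 - α) n⌋ + 1`, so some `i ∈ X` has `p_i ≥ p̃_i(X)`. The
in-neighbours of `i` outside `X` are exactly its active in-neighbours, so `i` is activated by `A`,
contradicting `i ∉ A`. -/

section Iterate

variable {α : Type*} {F : Finset α → Finset α}

theorem Finset.iterate_empty_subset_succ (hF : Monotone F) (t : ℕ) :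
    F^[t] ∅ ⊆ F^[t + 1] ∅ := by
  induction t with
  | zero => exact empty_subset _
  | succ t ih =>
    have := hF ih
    rwa [← Function.iterate_succ_apply' F, ← Function.iterate_succ_apply' F] at this

theorem Finset.le_card_iterate_empty (hF : Monotone F) {t : ℕ}
    (ht : F^[t] ∅ ≠ F^[t + 1] ∅) : t ≤ #(F^[t] ∅) := by
  induction t with
  | zero => exact Nat.zero_le _
  | succ t ih =>
    have hne : F^[t] ∅ ≠ F^[t + 1] ∅ := fun heq => by
      have := congrArg F heq
      rw [← Function.iterate_succ_apply' F, ← Function.iterate_succ_apply' F] at this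
      exact ht this
    have hlt : F^[t] ∅ ⊂ F^[t + 1] ∅ :=
      ssubset_iff_subset_ne.mpr ⟨iterate_empty_subset_succ hF t, hne⟩
    exact Nat.succ_le_of_lt ((ih hne).trans_lt (card_lt_card hlt))

theorem Finset.isFixedPt_iterate_card_empty [Fintype α] (hF : Monotone F) :
    Function.IsFixedPt F (F^[Fintype.card α] ∅) := by
  by_contra hne
  have hcard := le_card_iterate_empty hF (Ne.symm <| by
    rwa [Function.iterate_succ_apply'])
  have huniv : F^[Fintype.card α] ∅ = univ :=
    eq_univ_of_card _ (le_antisymm (card_le_univ _) hcard)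
  apply hne
  show F _ = _
  rw [← Function.iterate_succ_apply' F, huniv]
  exact eq_univ_of_forall fun i => iterate_empty_subset_succ hF _ (huniv ▸ mem_univ i)

end Iterate

section Propagation

variable {V : Type*} [Fintype V] (E : Finset (V × V)) (d : V → V → ℝ) (h : V → ℝ) (p : V → ℝ)

def propStep (S : Finset V) : Finset V :=
  univ.filter (fun i => h i ≤ p i + ∑ j ∈ S.filter (fun j => (j, i) ∈ E), d j i)

theorem propIter_eq_iterate (t : ℕ) : propIter E d h p t = (propStep E d h p)^[t] ∅ := by
  induction t with
  | zero => rfl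
  | succ t ih => rw [Function.iterate_succ_apply', ← ih]; rfl

variable {E d}

theorem propStep_monotone (hd : ∀ a ∈ E, 0 ≤ d a.1 a.2) : Monotone (propStep E d h p) := by
  intro S T hST i hi
  simp only [propStep, mem_filter, mem_univ, true_and] at hi ⊢
  exact hi.trans (add_le_add_right (sum_le_sum_of_subset_of_nonneg
    (filter_subset_filter _ hST) fun j hj _ => hd (j, i) (mem_filter.mp hj).2) _)

theorem propStep_propClosure (hd : ∀ a ∈ E, 0 ≤ d a.1 a.2) :
    propStep E d h p (propClosure E d h p) = propClosure E d h p := by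
  rw [propClosure, propIter_eq_iterate]
  exact isFixedPt_iterate_card_empty (propStep_monotone h p hd)

theorem Nbr_sdiff_compl (S : Finset V) (i : V) :
    Nbr E i \ Sᶜ = S.filter (fun j => (j, i) ∈ E) := by
  ext j
  simp only [Nbr, mem_sdiff, mem_filter, mem_univ, true_and, mem_compl, not_not]
  exact and_comm

end Propagation

theorem Int.floor_one_sub_mul_natCast (α : ℝ) (n : ℕ) :
    ⌊(1 - α) * (n : ℝ)⌋ = (n : ℤ) - ⌈α * (n : ℝ)⌉ := by
  rw [show (1 - α) * (n : ℝ) = -(α * n) + ((n : ℤ) : ℝ) by push_cast; ring,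
    Int.floor_add_intCast, Int.floor_neg]
  ring

theorem cf_integer_solution_feasible_general {V : Type*} [Fintype V]
    (E : Finset (V × V)) (d : V → V → ℝ) (h : V → ℝ) (P : V → Finset ℝ) (α : ℝ)
    (hd : ∀ a ∈ E, 0 < d a.1 a.2)
    (pt : Finset V → V → ℝ)
    (hpt : ∀ (X : Finset V), ∀ i ∈ X,
      IsLeast {q : ℝ | q ∈ P i ∧ h i ≤ q + ∑ j ∈ Nbr E i \ X, d j i} (pt X i))
    (p : V → ℝ)
    (hcons : ∀ X : Finset V,
      (X.card : ℤ) ≥ ⌊(1 - α) * (Fintype.card V : ℝ)⌋ + 1 →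
      ∃ i ∈ X, pt X i ≤ p i) :
    ((propClosure E d h p).card : ℤ) ≥ ⌈α * (Fintype.card V : ℝ)⌉ := by
  set A := propClosure E d h p
  by_contra! hsmall
  have hcompl : (#Aᶜ : ℤ) ≥ ⌊(1 - α) * (Fintype.card V : ℝ)⌋ + 1 := by
    rw [card_compl, Nat.cast_sub (card_le_univ A), Int.floor_one_sub_mul_natCast]
    omega
  obtain ⟨i, hi_inactive, hpi⟩ := hcons Aᶜ hcompl
  have hthreshold : h i ≤ p i + ∑ j ∈ A.filter (fun j => (j, i) ∈ E), d j i := by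
    have := (hpt Aᶜ i hi_inactive).1.2
    rw [Nbr_sdiff_compl] at this
    linarith
  have hstep : i ∈ propStep E d h p A := mem_filter.mpr ⟨mem_univ i, hthreshold⟩
  rw [propStep_propClosure h p fun a ha => (hd a ha).le] at hstep
  exact mem_compl.mp hi_inactive hstep

/-- Proposition 2: any integer solution of the compact formulation is feasible, i.e. if
the incentive assignment satisfies every compact-formulation constraint, then the
propagation closure activates at least `⌈α·n⌉` nodes. -/
theorem cf_integer_solution_feasible {V : Type*} [Fintype V]
    (E : Finset (V × V)) (d : V → V → ℝ) (h : V → ℝ) (P : V → Finset ℝ) (α : ℝ)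
    (hE : ∀ a ∈ E, a.1 ≠ a.2)
    (hd : ∀ a ∈ E, 0 < d a.1 a.2)
    (hh : ∀ i, 0 < h i)
    (hP0 : ∀ i, (0 : ℝ) ∈ P i)
    (hPnn : ∀ i, ∀ q ∈ P i, 0 ≤ q)
    (hα0 : 0 ≤ α) (hα1 : α ≤ 1)
    (hact : ∀ i, ∃ q ∈ P i, h i ≤ q)
    (pt : Finset V → V → ℝ)
    (hpt : ∀ (X : Finset V), ∀ i ∈ X,
      IsLeast {q : ℝ | q ∈ P i ∧ h i ≤ q + ∑ j ∈ Nbr E i \ X, d j i} (pt X i))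
    (p : V → ℝ) (hp : ∀ i, p i ∈ P i)
    (hcons : ∀ X : Finset V,
      (X.card : ℤ) ≥ ⌊(1 - α) * (Fintype.card V : ℝ)⌋ + 1 →
      ∃ i ∈ X, pt X i ≤ p i) :
    ((propClosure E d h p).card : ℤ) ≥ ⌈α * (Fintype.card V : ℝ)⌉ :=
  cf_integer_solution_feasible_general E d h P α hd pt hpt p hcons
end
end

section
/- Feasible solutions satisfy the compact formulation constraints (Proposition 3): Let p be an incentive assignment with p_i ∈ P_i for every i ∈ V, and suppose the propagation closure satisfies |A(p)| ≥ ⌈α·n⌉. Then for every set X ⊆ V with |X| ≥ ⌊(1 − α)·n⌋ + 1 there exists a node i ∈ X with p_i ≥ p̃_i(X). -/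
/-!
A node of `X` that becomes active at the first step `s + 1` at which propagation reaches `X`
was activated by in-neighbours in `A_s`, all of which lie outside `X`; with nonnegative
weights its own incentive therefore already reaches `h i` together with the whole influence
from outside `X`, which is the defining inequality of `p̃_i(X)`. Such a first step exists
because `|X| + |A(p)| ≥ ⌊(1 - α) n⌋ + 1 + ⌈α n⌉ = n + 1` forces `X` to meet `A(p)`.
-/

open scoped Classical
open Finset

noncomputable section

theorem Int.floor_sub_mul_add_ceil_mul (α : ℝ) (n : ℕ) :
    ⌊(1 - α) * (n : ℝ)⌋ + ⌈α * (n : ℝ)⌉ = n := by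
  have hsplit : (1 - α) * (n : ℝ) = ((n : ℤ) : ℝ) + -(α * n) := by push_cast; ring
  rw [hsplit, Int.floor_intCast_add, Int.floor_neg]
  ring

theorem threshold_le_of_mem_propIter_succ {V : Type*} [Fintype V]
    {E : Finset (V × V)} {d : V → V → ℝ} {h p : V → ℝ} (hd : ∀ a ∈ E, 0 ≤ d a.1 a.2)
    {X : Finset V} {s : ℕ} (hdisj : Disjoint X (propIter E d h p s)) {i : V}
    (hi : i ∈ propIter E d h p (s + 1)) :
    h i ≤ p i + ∑ j ∈ Nbr E i \ X, d j i := by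
  simp only [propIter, mem_filter, mem_univ, true_and] at hi
  have hsub : (propIter E d h p s).filter (fun j => (j, i) ∈ E) ⊆ Nbr E i \ X := by
    intro j hj
    obtain ⟨hjA, hjE⟩ := mem_filter.mp hj
    exact mem_sdiff.mpr ⟨mem_filter.mpr ⟨mem_univ _, hjE⟩,
      fun hjX => disjoint_left.mp hdisj hjX hjA⟩
  refine hi.trans (add_le_add_right (sum_le_sum_of_subset_of_nonneg hsub ?_) _)
  intro j hj _
  exact hd (j, i) (mem_filter.mp (mem_sdiff.mp hj).1).2

theorem exists_disjoint_propIter_and_mem_succ {V : Type*} [Fintype V]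
    (E : Finset (V × V)) (d : V → V → ℝ) (h p : V → ℝ) {X : Finset V} {t : ℕ}
    (hX : (X ∩ propIter E d h p t).Nonempty) :
    ∃ s, Disjoint X (propIter E d h p s) ∧ ∃ i ∈ X, i ∈ propIter E d h p (s + 1) := by
  obtain ⟨s, hs, i, hi⟩ := Nat.exists_not_and_succ_of_not_zero_of_exists
    (p := fun t => (X ∩ propIter E d h p t).Nonempty) (by simp [propIter]) ⟨t, hX⟩
  exact ⟨s, disjoint_iff_inter_eq_empty.mpr (not_nonempty_iff_eq_empty.mp hs),
    i, (mem_inter.mp hi).1, (mem_inter.mp hi).2⟩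

theorem feasible_satisfies_cf_constraints_general {V : Type*} [Fintype V]
    (E : Finset (V × V)) (d : V → V → ℝ) (h : V → ℝ) (P : V → Finset ℝ) (α : ℝ)
    (hd : ∀ a ∈ E, 0 < d a.1 a.2)
    (pt : Finset V → V → ℝ)
    (hpt : ∀ (X : Finset V), ∀ i ∈ X,
      IsLeast {q : ℝ | q ∈ P i ∧ h i ≤ q + ∑ j ∈ Nbr E i \ X, d j i} (pt X i))
    (p : V → ℝ) (hp : ∀ i, p i ∈ P i)
    (hcov : ((propClosure E d h p).card : ℤ) ≥ ⌈α * (Fintype.card V : ℝ)⌉) :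
    ∀ X : Finset V,
      (X.card : ℤ) ≥ ⌊(1 - α) * (Fintype.card V : ℝ)⌋ + 1 →
      ∃ i ∈ X, pt X i ≤ p i := by
  intro X hX
  have hcard : (univ : Finset V).card < X.card + (propClosure E d h p).card := by
    have := Int.floor_sub_mul_add_ceil_mul α (Fintype.card V)
    rw [card_univ]
    omega
  obtain ⟨s, hdisj, i, hiX, hi⟩ := exists_disjoint_propIter_and_mem_succ E d h p
    (inter_nonempty_of_card_lt_card_add_card (subset_univ X) (subset_univ _) hcard)
  exact ⟨i, hiX, (hpt X i hiX).2
    ⟨hp i, threshold_le_of_mem_propIter_succ (fun a ha => (hd a ha).le) hdisj hi⟩⟩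

/-- Proposition 3: any feasible integer solution satisfies the compact formulation
constraints. -/
theorem feasible_satisfies_cf_constraints {V : Type*} [Fintype V]
    (E : Finset (V × V)) (d : V → V → ℝ) (h : V → ℝ) (P : V → Finset ℝ) (α : ℝ)
    (hE : ∀ a ∈ E, a.1 ≠ a.2)
    (hd : ∀ a ∈ E, 0 < d a.1 a.2)
    (hh : ∀ i, 0 < h i)
    (hP0 : ∀ i, (0 : ℝ) ∈ P i)
    (hPnn : ∀ i, ∀ q ∈ P i, 0 ≤ q)
    (hα0 : 0 ≤ α) (hα1 : α ≤ 1)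
    (hact : ∀ i, ∃ q ∈ P i, h i ≤ q)
    (pt : Finset V → V → ℝ)
    (hpt : ∀ (X : Finset V), ∀ i ∈ X,
      IsLeast {q : ℝ | q ∈ P i ∧ h i ≤ q + ∑ j ∈ Nbr E i \ X, d j i} (pt X i))
    (p : V → ℝ) (hp : ∀ i, p i ∈ P i)
    (hcov : ((propClosure E d h p).card : ℤ) ≥ ⌈α * (Fintype.card V : ℝ)⌉) :
    ∀ X : Finset V,
      (X.card : ℤ) ≥ ⌊(1 - α) * (Fintype.card V : ℝ)⌋ + 1 →
      ∃ i ∈ X, pt X i ≤ p i :=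
  feasible_satisfies_cf_constraints_general E d h P α hd pt hpt p hp hcov
end
end

section
/- Correctness of the separation model for the compact formulation (SEP_CF cover condition): Let s¹, s⁰ : V → {0, 1} and y⁰ assign a value y⁰_{i,p} ∈ {0, 1} to each i ∈ V and p ∈ P_i, and suppose that s⁰_j ≥ 1 − s¹_j for every j ∈ V and that for every i ∈ V, Σ_{p ∈ P_i} p·y⁰_{i,p} + Σ_{j ∈ N_i} d(j, i)·(s⁰_j + s¹_i − 1) ≤ h(i) − 1. Then, setting X = {i ∈ V : s¹_i = 1}, every node i ∈ X satisfies Σ_{p ∈ P_i} p·y⁰_{i,p} + Σ_{j ∈ N_i ∖ X} d(j, i) ≤ h(i) − 1; in particular, the incentive level selected by y⁰ for i together with all influences from outside X is strictly below the threshold h(i). -/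
/- For `i ∈ X` the factor `s⁰_j + s¹_i - 1` is just `s⁰_j`, which the linking constraint forces
to be `≥ 0` everywhere and `≥ 1` outside `X`; so the influence from outside `X` is dominated by
the (nonnegatively weighted) sum in the SEP_CF cover constraint. -/

open scoped Classical
open Finset

noncomputable section

theorem Finset.sum_sdiff_le_sum_mul {ι : Type*} [DecidableEq ι] (s t : Finset ι) (w x : ι → ℝ)
    (hw : ∀ j ∈ s, 0 ≤ w j) (hx : ∀ j ∈ s, 0 ≤ x j) (hx_one : ∀ j ∈ s \ t, 1 ≤ x j) :
    ∑ j ∈ s \ t, w j ≤ ∑ j ∈ s, w j * x j :=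
  calc ∑ j ∈ s \ t, w j
      ≤ ∑ j ∈ s \ t, w j * x j :=
        sum_le_sum fun j hj => le_mul_of_one_le_right (hw j (mem_sdiff.1 hj).1) (hx_one j hj)
    _ ≤ ∑ j ∈ s, w j * x j :=
        sum_le_sum_of_subset_of_nonneg sdiff_subset fun j hj _ => mul_nonneg (hw j hj) (hx j hj)

section Linking

variable {V : Type*} {s1 s0 : V → ℝ}

theorem nonneg_of_linking (hs1 : ∀ i, s1 i = 0 ∨ s1 i = 1) (hlink : ∀ j, s0 j ≥ 1 - s1 j)
    (j : V) : 0 ≤ s0 j := by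
  rcases hs1 j with h | h <;> linarith [hlink j]

theorem one_le_of_linking (hs1 : ∀ i, s1 i = 0 ∨ s1 i = 1) (hlink : ∀ j, s0 j ≥ 1 - s1 j)
    {j : V} (hj : s1 j ≠ 1) : 1 ≤ s0 j := by
  linarith [hlink j, (hs1 j).resolve_right hj]

end Linking

theorem sep_cf_cover_condition_general {V : Type*} [Fintype V]
    (E : Finset (V × V)) (d : V → V → ℝ) (h : V → ℝ) (P : V → Finset ℝ)
    (hd : ∀ a ∈ E, 0 < d a.1 a.2)
    (s1 s0 : V → ℝ) (y0 : V → ℝ → ℝ)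
    (hs1 : ∀ i, s1 i = 0 ∨ s1 i = 1)
    (hlink : ∀ j, s0 j ≥ 1 - s1 j)
    (hcov : ∀ i, ∑ q ∈ P i, q * y0 i q
        + ∑ j ∈ Nbr E i, d j i * (s0 j + s1 i - 1) ≤ h i - 1) :
    ∀ i ∈ Finset.univ.filter (fun i => s1 i = 1),
      ∑ q ∈ P i, q * y0 i q
          + ∑ j ∈ Nbr E i \ Finset.univ.filter (fun i' => s1 i' = 1), d j i
        ≤ h i - 1 := by
  intro i hi
  have hi_one : s1 i = 1 := (mem_filter.1 hi).2
  have hcov_i := hcov i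
  simp only [hi_one, add_sub_cancel_right] at hcov_i
  have houtside := sum_sdiff_le_sum_mul (Nbr E i) (univ.filter fun i' => s1 i' = 1)
    (fun j => d j i) s0
    (fun j hj => (hd (j, i) (mem_filter.1 hj).2).le)
    (fun j _ => nonneg_of_linking hs1 hlink j)
    (fun j hj => one_le_of_linking hs1 hlink fun h1 =>
      (mem_sdiff.1 hj).2 (mem_filter.2 ⟨mem_univ j, h1⟩))
  linarith

/-- Correctness of the separation model for the compact formulation (SEP_CF cover
condition): for `X = {i : s¹ i = 1}`, every `i ∈ X` has its selected incentive plus all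
influences from outside `X` strictly below the threshold `h i`. -/
theorem sep_cf_cover_condition {V : Type*} [Fintype V]
    (E : Finset (V × V)) (d : V → V → ℝ) (h : V → ℝ) (P : V → Finset ℝ) (α : ℝ)
    (hE : ∀ a ∈ E, a.1 ≠ a.2)
    (hd : ∀ a ∈ E, 0 < d a.1 a.2)
    (hh : ∀ i, 0 < h i)
    (hP0 : ∀ i, (0 : ℝ) ∈ P i)
    (hPnn : ∀ i, ∀ q ∈ P i, 0 ≤ q)
    (hα0 : 0 ≤ α) (hα1 : α ≤ 1)
    (s1 s0 : V → ℝ) (y0 : V → ℝ → ℝ)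
    (hs1 : ∀ i, s1 i = 0 ∨ s1 i = 1)
    (hs0 : ∀ i, s0 i = 0 ∨ s0 i = 1)
    (hy0 : ∀ i, ∀ q ∈ P i, y0 i q = 0 ∨ y0 i q = 1)
    (hlink : ∀ j, s0 j ≥ 1 - s1 j)
    (hcov : ∀ i, ∑ q ∈ P i, q * y0 i q
        + ∑ j ∈ Nbr E i, d j i * (s0 j + s1 i - 1) ≤ h i - 1) :
    ∀ i ∈ Finset.univ.filter (fun i => s1 i = 1),
      ∑ q ∈ P i, q * y0 i q
          + ∑ j ∈ Nbr E i \ Finset.univ.filter (fun i' => s1 i' = 1), d j i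
        ≤ h i - 1 :=
  sep_cf_cover_condition_general E d h P hd s1 s0 y0 hs1 hlink hcov
end
end

section
/- Correctness of the influence cover cut separation model (SEP dominates the cut left-hand side): Fix a node k ∈ V and nonnegative real values x̄_i (i ∈ V), ȳ_{i,p} (i ∈ V, p ∈ P_i), and z̄_{j,i} ((j, i) ∈ E). Let s : V → {0, 1}, y⁰, y¹ (indexed by i ∈ V and p ∈ P_i, values in {0, 1}), and z⁰, z¹ (indexed by arcs (j, i) ∈ E, values in {0, 1}) satisfy: s_k = 1; Σ_{p ∈ P_i} y⁰_{i,p} ≤ 1 for every i; Σ_{p ∈ P_i} p·y⁰_{i,p} + Σ_{j ∈ N_i} d(j, i)·z⁰_{j,i} ≤ h(i) − 1 for every i; y¹_{i,p} ≥ s_i − Σ_{q ∈ P_i, q ≥ p} y⁰_{i,q} for every i and p ∈ P_i; and z¹_{j,i} ≥ s_i − s_j − z⁰_{j,i} for every (j, i) ∈ E. Define X = {i ∈ V : s_i = 1}, p̃_i = Σ_{p ∈ P_i} p·y⁰_{i,p}, and Ñ_i = {j ∈ N_i ∖ X : z⁰_{j,i} = 1}. Then: (a) k ∈ X, and for every i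 ∈ X one has p̃_i ∈ P_i, Ñ_i ⊆ N_i ∖ X, and Σ_{j ∈ Ñ_i} d(j, i) + p̃_i < h(i) (so X, (Ñ_i), (p̃_i) are valid parameters for an influence cover cut); and (b) the left-hand side of the corresponding influence cover cut evaluated at (ȳ, z̄) is bounded by the separation objective: Σ_{i ∈ X} Σ_{p ∈ P_i, p > p̃_i} ȳ_{i,p} + Σ_{i ∈ X} Σ_{j ∈ N_i ∖ (X ∪ Ñ_i)} z̄_{j,i} ≤ Σ_{i ∈ V} Σ_{p ∈ P_i} ȳ_{i,p}·y¹_{i,p} + Σ_{(j,i) ∈ E} z̄_{j,i}·z¹_{j,i}. -/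
open scoped Classical
open Finset

noncomputable section

/-- Correctness of the influence cover cut separation model (SEP): any feasible solution
of the separation MIP yields valid influence-cover-cut parameters
`X = {i : s i = 1}`, `p̃ i = Σ_{p ∈ P i} p·y⁰`, `Ñ i = {j ∈ N i ∖ X : z⁰ j i = 1}`,
and the left-hand side of the corresponding cut at `(ȳ, z̄)` is bounded above by the
separation objective. -/
theorem sep_icc_correct {V : Type*} [Fintype V]
    (E : Finset (V × V)) (d : V → V → ℝ) (h : V → ℝ) (P : V → Finset ℝ) (α : ℝ)
    (hE : ∀ a ∈ E, a.1 ≠ a.2)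
    (hd : ∀ a ∈ E, 0 < d a.1 a.2)
    (hh : ∀ i, 0 < h i)
    (hP0 : ∀ i, (0 : ℝ) ∈ P i)
    (hPnn : ∀ i, ∀ q ∈ P i, 0 ≤ q)
    (hα0 : 0 ≤ α) (hα1 : α ≤ 1)
    (k : V)
    (xb : V → ℝ) (yb : V → ℝ → ℝ) (zb : V → V → ℝ)
    (hxb : ∀ i, 0 ≤ xb i)
    (hyb : ∀ i, ∀ q ∈ P i, 0 ≤ yb i q)
    (hzb : ∀ a ∈ E, 0 ≤ zb a.1 a.2)
    (s : V → ℝ) (y0 y1 : V → ℝ → ℝ) (z0 z1 : V → V → ℝ)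
    (hs01 : ∀ i, s i = 0 ∨ s i = 1)
    (hy0b : ∀ i, ∀ q ∈ P i, y0 i q = 0 ∨ y0 i q = 1)
    (hy1b : ∀ i, ∀ q ∈ P i, y1 i q = 0 ∨ y1 i q = 1)
    (hz0b : ∀ a ∈ E, z0 a.1 a.2 = 0 ∨ z0 a.1 a.2 = 1)
    (hz1b : ∀ a ∈ E, z1 a.1 a.2 = 0 ∨ z1 a.1 a.2 = 1)
    (hsk : s k = 1)
    (hy0sum : ∀ i, ∑ q ∈ P i, y0 i q ≤ 1)
    (hcov : ∀ i, ∑ q ∈ P i, q * y0 i q + ∑ j ∈ Nbr E i, d j i * z0 j i ≤ h i - 1)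
    (hy1l : ∀ i, ∀ q ∈ P i,
      y1 i q ≥ s i - ∑ r ∈ (P i).filter (fun r => q ≤ r), y0 i r)
    (hz1l : ∀ a ∈ E, z1 a.1 a.2 ≥ s a.2 - s a.1 - z0 a.1 a.2) :
    -- (a) `X`, `(Ñ i)`, `(p̃ i)` are valid influence-cover-cut parameters:
    (k ∈ Finset.univ.filter (fun i => s i = 1)) ∧
    (∀ i ∈ Finset.univ.filter (fun i => s i = 1),
      (∑ q ∈ P i, q * y0 i q) ∈ P i ∧
      (Nbr E i \ Finset.univ.filter (fun i' => s i' = 1)).filter (fun j => z0 j i = 1)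
        ⊆ Nbr E i \ Finset.univ.filter (fun i' => s i' = 1) ∧
      (∑ j ∈ (Nbr E i \ Finset.univ.filter (fun i' => s i' = 1)).filter
          (fun j => z0 j i = 1), d j i) + ∑ q ∈ P i, q * y0 i q < h i) ∧
    -- (b) the cut left-hand side at `(ȳ, z̄)` is bounded by the separation objective:
    ((∑ i ∈ Finset.univ.filter (fun i => s i = 1),
        ∑ q ∈ (P i).filter (fun q => (∑ r ∈ P i, r * y0 i r) < q), yb i q)
      + (∑ i ∈ Finset.univ.filter (fun i => s i = 1),
          ∑ j ∈ Nbr E i \ (Finset.univ.filter (fun i' => s i' = 1) ∪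
              (Nbr E i \ Finset.univ.filter (fun i' => s i' = 1)).filter
                (fun j => z0 j i = 1)), zb j i)
      ≤ (∑ i : V, ∑ q ∈ P i, yb i q * y1 i q)
        + ∑ a ∈ E, zb a.1 a.2 * z1 a.1 a.2) := by

  classical
  set X := Finset.univ.filter (fun i => s i = 1) with hXdef
  have hy0nn : ∀ i, ∀ q ∈ P i, 0 ≤ y0 i q := by
    intro i q hq; rcases hy0b i q hq with h'|h' <;> simp [h']
  have hy1nn : ∀ i, ∀ q ∈ P i, 0 ≤ y1 i q := by
    intro i q hq; rcases hy1b i q hq with h'|h' <;> simp [h']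
  have hz0nn : ∀ a ∈ E, 0 ≤ z0 a.1 a.2 := by
    intro a ha; rcases hz0b a ha with h'|h' <;> simp [h']
  have hz1nn : ∀ a ∈ E, 0 ≤ z1 a.1 a.2 := by
    intro a ha; rcases hz1b a ha with h'|h' <;> simp [h']
  -- key uniqueness lemma for y0
  have key : ∀ i, (∑ q ∈ P i, q * y0 i q) ∈ P i ∧
      ∀ r ∈ P i, (∑ q ∈ P i, q * y0 i q) < r → y0 i r = 0 := by
    intro i
    by_cases hA : ∀ q ∈ P i, y0 i q = 0
    · have hz : (∑ q ∈ P i, q * y0 i q) = 0 :=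
        Finset.sum_eq_zero (fun q hq => by rw [hA q hq, mul_zero])
      exact ⟨hz ▸ hP0 i, fun r hr _ => hA r hr⟩
    · push_neg at hA
      obtain ⟨r, hr, hr0⟩ := hA
      have hr1 : y0 i r = 1 := (hy0b i r hr).resolve_left hr0
      have huniq : ∀ q ∈ P i, q ≠ r → y0 i q = 0 := by
        intro q hq hqr
        by_contra hq0
        have hq1 : y0 i q = 1 := (hy0b i q hq).resolve_left hq0
        have hsub : ({q, r} : Finset ℝ) ⊆ P i := by
          intro x hx
          simp only [Finset.mem_insert, Finset.mem_singleton] at hx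
          rcases hx with rfl|rfl <;> assumption
        have h2 := Finset.sum_le_sum_of_subset_of_nonneg hsub
          (fun x hx _ => hy0nn i x hx)
        rw [Finset.sum_pair hqr, hq1, hr1] at h2
        have := h2.trans (hy0sum i)
        linarith
      have hsum : (∑ q ∈ P i, q * y0 i q) = r := by
        rw [Finset.sum_eq_single r
          (fun q hq hqr => by rw [huniq q hq hqr, mul_zero])
          (fun hcon => absurd hr hcon), hr1, mul_one]
      refine ⟨hsum ▸ hr, ?_⟩
      intro q hq hlt
      rcases eq_or_ne q r with rfl|hqr
      · rw [hsum] at hlt; linarith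
      · exact huniq q hq hqr
  have hkX : k ∈ X := by simp [hXdef, hsk]
  refine ⟨hkX, ?_, ?_⟩
  · -- part (a)
    intro i hi
    refine ⟨(key i).1, Finset.filter_subset _ _, ?_⟩
    have hle : (∑ j ∈ ((Nbr E i \ X).filter (fun j => z0 j i = 1)), d j i)
        ≤ ∑ j ∈ Nbr E i, d j i * z0 j i := by
      have h1 : (∑ j ∈ ((Nbr E i \ X).filter (fun j => z0 j i = 1)), d j i)
          = ∑ j ∈ ((Nbr E i \ X).filter (fun j => z0 j i = 1)), d j i * z0 j i := by
        refine Finset.sum_congr rfl (fun j hj => ?_)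
        have := (Finset.mem_filter.mp hj).2
        rw [this, mul_one]
      rw [h1]
      refine Finset.sum_le_sum_of_subset_of_nonneg ?_ (fun j hj _ => ?_)
      · exact (Finset.filter_subset _ _).trans (Finset.sdiff_subset)
      · have hjE : (j, i) ∈ E := by
          simpa [Nbr] using hj
        exact mul_nonneg (le_of_lt (hd (j, i) hjE)) (hz0nn (j, i) hjE)
    have := hcov i
    linarith
  · -- part (b)
    have hsXi : ∀ i ∈ X, s i = 1 := by
      intro i hi; simpa [hXdef] using hi
    -- y part
    have hy : (∑ i ∈ X, ∑ q ∈ (P i).filter (fun q => (∑ r ∈ P i, r * y0 i r) < q), yb i q)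
        ≤ ∑ i : V, ∑ q ∈ P i, yb i q * y1 i q := by
      have step1 : ∀ i ∈ X,
          (∑ q ∈ (P i).filter (fun q => (∑ r ∈ P i, r * y0 i r) < q), yb i q)
          ≤ ∑ q ∈ P i, yb i q * y1 i q := by
        intro i hi
        have step : ∀ q ∈ (P i).filter (fun q => (∑ r ∈ P i, r * y0 i r) < q),
            yb i q ≤ yb i q * y1 i q := by
          intro q hq
          obtain ⟨hqP, hqlt⟩ := Finset.mem_filter.mp hq
          have hzero : (∑ r ∈ (P i).filter (fun r => q ≤ r), y0 i r) = 0 := by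
            refine Finset.sum_eq_zero (fun r hr => ?_)
            obtain ⟨hrP, hrq⟩ := Finset.mem_filter.mp hr
            exact (key i).2 r hrP (lt_of_lt_of_le hqlt hrq)
          have h1 := hy1l i q hqP
          rw [hzero, hsXi i hi] at h1
          have : (1 : ℝ) ≤ y1 i q := by linarith
          nlinarith [hyb i q hqP]
        calc (∑ q ∈ (P i).filter (fun q => (∑ r ∈ P i, r * y0 i r) < q), yb i q)
            ≤ ∑ q ∈ (P i).filter (fun q => (∑ r ∈ P i, r * y0 i r) < q), yb i q * y1 i q :=
              Finset.sum_le_sum step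
          _ ≤ ∑ q ∈ P i, yb i q * y1 i q := by
              refine Finset.sum_le_sum_of_subset_of_nonneg (Finset.filter_subset _ _)
                (fun q hq _ => mul_nonneg (hyb i q hq) (hy1nn i q hq))
      calc (∑ i ∈ X, ∑ q ∈ (P i).filter (fun q => (∑ r ∈ P i, r * y0 i r) < q), yb i q)
          ≤ ∑ i ∈ X, ∑ q ∈ P i, yb i q * y1 i q := Finset.sum_le_sum step1
        _ ≤ ∑ i : V, ∑ q ∈ P i, yb i q * y1 i q := by
            refine Finset.sum_le_sum_of_subset_of_nonneg (Finset.subset_univ _)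
              (fun i _ _ => Finset.sum_nonneg
                (fun q hq => mul_nonneg (hyb i q hq) (hy1nn i q hq)))
    -- z part
    have hfib : ∀ i : V, E.filter (fun a => a.2 = i)
        = (Nbr E i).map ⟨fun j => (j, i), fun a b hab => by
            simpa using congrArg Prod.fst hab⟩ := by
      intro i
      ext a
      simp only [Finset.mem_filter, Finset.mem_map, Function.Embedding.coeFn_mk, Nbr,
        Finset.mem_univ, true_and]
      constructor
      · rintro ⟨haE, rfl⟩
        exact ⟨a.1, by simpa using haE, rfl⟩
      · rintro ⟨j, hj, rfl⟩
        exact ⟨hj, rfl⟩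
    have hEsum : ∀ F : V → V → ℝ,
        (∑ a ∈ E, F a.1 a.2) = ∑ i : V, ∑ j ∈ Nbr E i, F j i := by
      intro F
      rw [← Finset.sum_fiberwise_of_maps_to (g := Prod.snd) (t := Finset.univ)
        (fun a _ => Finset.mem_univ _)]
      refine Finset.sum_congr rfl (fun i _ => ?_)
      rw [hfib i, Finset.sum_map]; rfl
    have hz : (∑ i ∈ X, ∑ j ∈ Nbr E i \ (X ∪ (Nbr E i \ X).filter (fun j => z0 j i = 1)),
          zb j i) ≤ ∑ a ∈ E, zb a.1 a.2 * z1 a.1 a.2 := by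
      rw [hEsum (fun j i => zb j i * z1 j i)]
      have step1 : ∀ i ∈ X,
          (∑ j ∈ Nbr E i \ (X ∪ (Nbr E i \ X).filter (fun j => z0 j i = 1)), zb j i)
          ≤ ∑ j ∈ Nbr E i, zb j i * z1 j i := by
        intro i hi
        have step : ∀ j ∈ Nbr E i \ (X ∪ (Nbr E i \ X).filter (fun j => z0 j i = 1)),
            zb j i ≤ zb j i * z1 j i := by
          intro j hj
          obtain ⟨hjN, hjnot⟩ := Finset.mem_sdiff.mp hj
          have hjE : (j, i) ∈ E := by simpa [Nbr] using hjN
          simp only [Finset.mem_union, not_or] at hjnot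
          obtain ⟨hjX, hjT⟩ := hjnot
          have hsj : s j = 0 := by
            rcases hs01 j with h'|h'
            · exact h'
            · exact absurd (by simp [hXdef, h']) hjX
          have hz0j : z0 j i = 0 := by
            rcases hz0b (j, i) hjE with h'|h'
            · exact h'
            · exact absurd (Finset.mem_filter.mpr ⟨Finset.mem_sdiff.mpr ⟨hjN, hjX⟩, h'⟩) hjT
          have h1 := hz1l (j, i) hjE
          simp only at h1
          rw [hsXi i hi, hsj, hz0j] at h1
          have : (1 : ℝ) ≤ z1 j i := by linarith
          nlinarith [hzb (j, i) hjE]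
        calc (∑ j ∈ Nbr E i \ (X ∪ (Nbr E i \ X).filter (fun j => z0 j i = 1)), zb j i)
            ≤ ∑ j ∈ Nbr E i \ (X ∪ (Nbr E i \ X).filter (fun j => z0 j i = 1)),
                zb j i * z1 j i := Finset.sum_le_sum step
          _ ≤ ∑ j ∈ Nbr E i, zb j i * z1 j i := by
              refine Finset.sum_le_sum_of_subset_of_nonneg (Finset.sdiff_subset)
                (fun j hj _ => ?_)
              have hjE : (j, i) ∈ E := by simpa [Nbr] using hj
              exact mul_nonneg (hzb (j, i) hjE) (hz1nn (j, i) hjE)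
      calc (∑ i ∈ X, ∑ j ∈ Nbr E i \ (X ∪ (Nbr E i \ X).filter (fun j => z0 j i = 1)),
            zb j i)
          ≤ ∑ i ∈ X, ∑ j ∈ Nbr E i, zb j i * z1 j i := Finset.sum_le_sum step1
        _ ≤ ∑ i : V, ∑ j ∈ Nbr E i, zb j i * z1 j i := by
            refine Finset.sum_le_sum_of_subset_of_nonneg (Finset.subset_univ _)
              (fun i _ _ => Finset.sum_nonneg (fun j hj => ?_))
            have hjE : (j, i) ∈ E := by simpa [Nbr] using hj
            exact mul_nonneg (hzb (j, i) hjE) (hz1nn (j, i) hjE)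
    exact add_le_add hy hz
end
end
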